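/- arXiv:2012.07726 — 4 statements merged into one kernel-verified Lean document; each statement's English description precedes it below -/
import Mathlib

section
/- Let n, k, t be positive integers with kt ≤ n, and let G_1, …, G_t be pairwise edge-disjoint subgraphs of the complete bipartite graph K_{n,n} such that no G_i contains a cycle of length at most 2k. Then there exists a 3-partite 3-uniform hypergraph on at most 3n vertices which is tight-cycle-free and has exactly k · Σ_{i=1}^{t} |E(G_i)| hyperedges. -/
/-!
Take as vertices the two sides of `K_{n,n}` together with `k` new vertices `z_{i,1}, …, z_{i,k}`
for each `G_i`, and as hyperedges all `e ∪ {z_{i,j}}` with `e ∈ E(G_i)`. In a tight cycle every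
window of three consecutive vertices contains exactly one `z`-vertex, so the `z`-vertices occupy
every third position and the length is `3s`. Two consecutive windows share the graph edge between
them, so by edge-disjointness all `z`-vertices of the cycle belong to one `G_i`; hence `s ≤ k`,
and deleting the `z`-vertices leaves a cycle of length `2s ≤ 2k` in `G_i`.
-/

/-- The edge ("window") `{v i, v (i+1), …, v (i+r-1)}` of a tight cycle. -/
def tightWindow {V : Type*} [DecidableEq V] (r : ℕ) {ℓ : ℕ} (v : ZMod ℓ → V)
    (i : ZMod ℓ) : Finset V :=
  Finset.image (fun j : Fin r => v (i + (j : ℕ))) Finset.univ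

/-- `E` contains an `r`-uniform tight cycle of length `ℓ`: distinct vertices
`v 0, …, v (ℓ-1)` all of whose `r`-windows (indices mod `ℓ`) are edges of `E`. -/
def IsTightCycleIn {V : Type*} [DecidableEq V] (r ℓ : ℕ) (E : Set (Finset V)) : Prop :=
  ∃ v : ZMod ℓ → V, Function.Injective v ∧ ∀ i : ZMod ℓ, tightWindow r v i ∈ E

/-- `E` contains an `r`-uniform tight cycle of some length `ℓ > r`. -/
def HasTightCycle {V : Type*} [DecidableEq V] (r : ℕ) (E : Set (Finset V)) : Prop :=
  ∃ ℓ : ℕ, r < ℓ ∧ IsTightCycleIn r ℓ E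

/-- `E` is tight-cycle-free. -/
def TightCycleFree {V : Type*} [DecidableEq V] (r : ℕ) (E : Set (Finset V)) : Prop :=
  ¬ HasTightCycle r E

/-- `f_r(n)`: the maximum number of edges of an `r`-uniform tight-cycle-free
hypergraph on `n` vertices. -/
noncomputable def tightCycleTuran (r n : ℕ) : ℕ :=
  sSup {m | ∃ E : Finset (Finset (Fin n)), (∀ e ∈ E, e.card = r) ∧
    TightCycleFree r (E : Set (Finset (Fin n))) ∧ E.card = m}

open Finset Function Sum

section TightCycle

variable {α β : Type*} [DecidableEq α] [DecidableEq β]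

lemma tightWindow_comp (f : α → β) (r : ℕ) {ℓ : ℕ} (v : ZMod ℓ → α) (i : ZMod ℓ) :
    tightWindow r (f ∘ v) i = (tightWindow r v i).image f := by
  simp only [tightWindow, image_image]
  rfl

lemma tightWindow_three {ℓ : ℕ} (v : ZMod ℓ → α) (i : ZMod ℓ) :
    tightWindow 3 v i = {v i, v (i + 1), v (i + 2)} := by
  ext x
  simp [tightWindow, Fin.exists_fin_succ, eq_comm, one_add_one_eq_two]

lemma TightCycleFree.image_equiv {r : ℕ} {E : Set (Finset α)} (h : TightCycleFree r E)
    (e : α ≃ β) : TightCycleFree r (Finset.map e.toEmbedding '' E) := by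
  rintro ⟨ℓ, hℓ, v, hv, hw⟩
  refine h ⟨ℓ, hℓ, e.symm ∘ v, e.symm.injective.comp hv, fun i => ?_⟩
  obtain ⟨s, hs, hsv⟩ := hw i
  rw [tightWindow_comp, ← hsv, map_eq_image, image_image]
  simpa using hs

lemma IsTightCycleIn.exists_periodic_three {ℓ : ℕ} {E : Set (Finset α)}
    (h : IsTightCycleIn 3 ℓ E) :
    ∃ f : ℕ → α, Periodic f ℓ ∧
      (∀ p a b, a < ℓ → b < ℓ → f (p + a) = f (p + b) → a = b) ∧
      ∀ c, ({f c, f (c + 1), f (c + 2)} : Finset α) ∈ E := by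
  obtain ⟨v, hv, hw⟩ := h
  refine ⟨fun c => v c, fun c => by simp, fun p a b ha hb hab => ?_, fun c => ?_⟩
  · have := hv hab
    push_cast at this
    rw [add_right_inj, ZMod.natCast_eq_natCast_iff'] at this
    rwa [Nat.mod_eq_of_lt ha, Nat.mod_eq_of_lt hb] at this
  · simpa [tightWindow_three] using hw c

end TightCycle

namespace SimpleGraph

lemma cycleGraph_isContained_of_periodic {V : Type*} {G : SimpleGraph V}
    {m : ℕ} {w : ℕ → V} (hper : Periodic w m) (hinj : Set.InjOn w (Set.Iio m))
    (hadj : ∀ r, G.Adj (w r) (w (r + 1))) : cycleGraph m ⊑ G := by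
  have step (a b : Fin m) (hab : (b - a).val = 1) : G.Adj (w a) (w b) := by
    rcases le_or_gt a b with hle | hlt
    · rw [Fin.coe_sub_iff_le.2 hle] at hab
      rw [show (b : ℕ) = a + 1 by omega]
      exact hadj a
    · rw [Fin.coe_sub_iff_lt.2 hlt] at hab
      have hb : (b : ℕ) = 0 := by omega
      have ha : (a : ℕ) + 1 = m := by omega
      simpa [hb, ← hper.eq, ha] using hadj a
  refine ⟨⟨⟨fun r => w r, @fun a b hab => ?_⟩, fun a b hab => Fin.ext (hinj a.2 b.2 hab)⟩⟩
  rcases cycleGraph_adj'.1 hab with h | h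
  · exact (step b a h).symm
  · exact step a b h

end SimpleGraph

section BlowUp

variable {V ι : Type*} [DecidableEq V] [DecidableEq ι] [Fintype ι]

/-- The hyperedges `e ∪ {z_{i,j}}`, with `z_{i,j}` encoded as `inr (i, j)`. -/
def blowUp (G : ι → SimpleGraph V) [∀ i, Fintype (G i).edgeSet] (k : ℕ) :
    Finset (Finset (V ⊕ ι × Fin k)) :=
  ((univ.sigma fun i => (G i).edgeFinset) ×ˢ univ).image
    fun q => insert (inr (q.1.1, q.2)) (q.1.2.map inl).toFinset

variable {G : ι → SimpleGraph V} [∀ i, Fintype (G i).edgeSet] {k : ℕ}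

lemma mem_blowUp {e : Finset (V ⊕ ι × Fin k)} :
    e ∈ blowUp G k ↔ ∃ i j u w, (G i).Adj u w ∧ e = {inr (i, j), inl u, inl w} := by
  simp only [blowUp, mem_image, mem_product, mem_sigma, mem_univ, true_and, and_true]
  constructor
  · rintro ⟨⟨⟨i, s⟩, j⟩, hs, rfl⟩
    induction s using Sym2.ind with
    | _ u w => exact ⟨i, j, u, w, by simpa using hs, by simp [Sym2.toFinset_mk_eq]⟩
  · rintro ⟨i, j, u, w, huw, rfl⟩
    exact ⟨⟨⟨i, s(u, w)⟩, j⟩, by simpa using huw, by simp [Sym2.toFinset_mk_eq]⟩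

lemma card_blowUp : #(blowUp G k) = k * ∑ i, #(G i).edgeFinset := by
  rw [blowUp, card_image_of_injective, card_product, card_sigma, card_univ, Fintype.card_fin,
    mul_comm]
  rintro ⟨⟨i, s⟩, j⟩ ⟨⟨i', s'⟩, j'⟩ h
  obtain ⟨rfl, rfl⟩ : i = i' ∧ j = j' := by simpa using congrArg (inr (i, j) ∈ ·) h
  obtain rfl : s = s' := Sym2.ext fun x => by simpa using congrArg (inl x ∈ ·) h
  rfl

lemma exists_inr_mem_of_mem_blowUp {e : Finset (V ⊕ ι × Fin k)} (he : e ∈ blowUp G k) :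
    ∃ z, inr z ∈ e := by
  obtain ⟨i, j, -, -, -, rfl⟩ := mem_blowUp.1 he
  exact ⟨(i, j), mem_insert_self _ _⟩

lemma exists_adj_of_inr_mem_blowUp {z : ι × Fin k} {b c : V ⊕ ι × Fin k}
    (h : {inr z, b, c} ∈ blowUp G k) : ∃ u w, b = inl u ∧ c = inl w ∧ (G z.1).Adj u w := by
  obtain ⟨i, j, u, w, huw, he⟩ := mem_blowUp.1 h
  have hne := huw.ne
  have hz := he ▸ mem_insert_self (inr z) {b, c}
  have hu : inl u ∈ ({inr z, b, c} : Finset _) := he ▸ by simp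
  have hw : inl w ∈ ({inr z, b, c} : Finset _) := he ▸ by simp
  have hb : b ∈ ({inr (i, j), inl u, inl w} : Finset _) := he ▸ by simp
  have hc : c ∈ ({inr (i, j), inl u, inl w} : Finset _) := he ▸ by simp
  simp only [mem_insert, mem_singleton, reduceCtorEq, or_false, inr.injEq] at hz hu hw hb hc
  subst hz
  rcases hb with rfl | rfl | rfl <;> rcases hc with rfl | rfl | rfl <;> simp_all [huw.symm]

lemma exists_adj_of_inl_inl_mem_blowUp {u w : V} {d : V ⊕ ι × Fin k}
    (h : {inl u, inl w, d} ∈ blowUp G k) : ∃ z, d = inr z ∧ (G z.1).Adj u w := by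
  obtain ⟨z, hz⟩ := exists_inr_mem_of_mem_blowUp h
  obtain rfl : d = inr z := by simpa [eq_comm] using hz
  rw [pair_comm, insert_comm] at h
  obtain ⟨u', w', ⟨⟩, ⟨⟩, huw⟩ := exists_adj_of_inr_mem_blowUp h
  exact ⟨z, rfl, huw⟩

section Sequences

variable {f : ℕ → V ⊕ ι × Fin k}

lemma exists_eq_inr_add_three_mul
    (hf : ∀ c, ({f c, f (c + 1), f (c + 2)} : Finset _) ∈ blowUp G k)
    (hdisj : Pairwise (Disjoint on fun i => (G i).edgeSet))
    {p : ℕ} {i : ι} {j : Fin k} (hp : f p = inr (i, j)) (a : ℕ) :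
    ∃ j', f (p + 3 * a) = inr (i, j') := by
  induction a with
  | zero => exact ⟨j, hp⟩
  | succ a ih =>
    obtain ⟨j, hj⟩ := ih
    have h₀ := hf (p + 3 * a)
    rw [hj] at h₀
    obtain ⟨u, w, hu, hw, huw⟩ := exists_adj_of_inr_mem_blowUp h₀
    have h₁ := hf (p + 3 * a + 1)
    rw [hu, show p + 3 * a + 1 + 1 = p + 3 * a + 2 by rfl, hw] at h₁
    obtain ⟨⟨i', j'⟩, hz, huw'⟩ := exists_adj_of_inl_inl_mem_blowUp h₁
    obtain rfl : i = i' := hdisj.eq (Set.not_disjoint_iff.2 ⟨s(u, w), huw, huw'⟩)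
    exact ⟨j', hz⟩

/- `r ↦ r + r / 2 + 1` enumerates the offsets not divisible by 3, so `w` lists the graph
vertices of the sequence in order. -/
lemma exists_adj_seq_of_eq_inr
    (hf : ∀ c, ({f c, f (c + 1), f (c + 2)} : Finset _) ∈ blowUp G k)
    (hdisj : Pairwise (Disjoint on fun i => (G i).edgeSet))
    {p : ℕ} {i : ι} {j : Fin k} (hp : f p = inr (i, j)) :
    ∃ w : ℕ → V, (∀ r, f (p + (r + r / 2 + 1)) = inl (w r)) ∧
      ∀ r, (G i).Adj (w r) (w (r + 1)) := by
  have hz := exists_eq_inr_add_three_mul hf hdisj hp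
  have hstep : ∀ r, ∃ u u', f (p + (r + r / 2 + 1)) = inl u ∧
      f (p + (r + 1 + (r + 1) / 2 + 1)) = inl u' ∧ (G i).Adj u u' := by
    intro r
    obtain ⟨a, rfl | rfl⟩ := Nat.even_or_odd' r
    · obtain ⟨j, hj⟩ := hz a
      have h := hf (p + 3 * a)
      rw [hj] at h
      obtain ⟨u, u', hu, hu', huu'⟩ := exists_adj_of_inr_mem_blowUp h
      refine ⟨u, u', ?_, ?_, huu'⟩
      · rw [← hu]; congr 1; omega
      · rw [← hu']; congr 1; omega
    · obtain ⟨j, hj⟩ := hz (a + 1)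
      have h := hf (p + 3 * a + 2)
      rw [show p + 3 * a + 2 + 1 = p + 3 * (a + 1) by ring, hj, insert_comm, pair_comm] at h
      obtain ⟨u', u, hu', hu, hu'u⟩ := exists_adj_of_inr_mem_blowUp h
      refine ⟨u, u', ?_, ?_, hu'u.symm⟩
      · rw [← hu]; congr 1; omega
      · rw [← hu']; congr 1; omega
  choose u u' hu hu' huu' using hstep
  exact ⟨u, hu, fun r => inl_injective ((hu' r).symm.trans (hu (r + 1))) ▸ huu' r⟩

end Sequences

open SimpleGraph in
theorem tightCycleFree_blowUp (hdisj : Pairwise (Disjoint on fun i => (G i).edgeSet))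
    (hgirth : ∀ i, 2 * k < (G i).egirth) :
    TightCycleFree 3 (blowUp G k : Set (Finset (V ⊕ ι × Fin k))) := by
  rintro ⟨ℓ, hℓ, hcyc⟩
  obtain ⟨f, hper, hinj, hf⟩ := hcyc.exists_periodic_three
  obtain ⟨⟨i, j⟩, hz⟩ := exists_inr_mem_of_mem_blowUp (hf 0)
  obtain ⟨p, hp⟩ : ∃ p, f p = inr (i, j) := by
    simp only [mem_insert, mem_singleton] at hz
    rcases hz with h | h | h
    exacts [⟨_, h.symm⟩, ⟨_, h.symm⟩, ⟨_, h.symm⟩]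
  obtain ⟨w, hw, hadj⟩ := exists_adj_seq_of_eq_inr hf hdisj hp
  obtain ⟨s, rfl⟩ : 3 ∣ ℓ := by
    -- otherwise `f (p + ℓ) = f p` would be both a graph vertex and a `z`-vertex
    by_contra h
    obtain ⟨r, hr⟩ : ∃ r, ℓ = r + r / 2 + 1 := ⟨2 * (ℓ / 3) + ℓ % 3 - 1, by omega⟩
    have := hper p
    rw [hr, hw, hp] at this
    exact inl_ne_inr this
  have hsk : s ≤ k := by
    choose J hJ using exists_eq_inr_add_three_mul hf hdisj hp
    have : Injective fun a : Fin s => J a := fun a b hab => Fin.ext <| by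
      have := hinj p (3 * a) (3 * b) (by omega) (by omega) (by simp only [hJ, hab])
      omega
    simpa using Fintype.card_le_of_injective _ this
  have hwper : Periodic w (2 * s) := fun r => inl_injective <| by
    rw [← hw, ← hw, ← hper (p + (r + r / 2 + 1))]
    congr 1
    omega
  have hwinj : Set.InjOn w (Set.Iio (2 * s)) := fun r (hr : r < 2 * s) r' (hr' : r' < 2 * s) h => by
    have := hinj p _ _ (by omega) (by omega) ((hw r).trans (h ▸ (hw r').symm))
    omega
  obtain ⟨x, c, hc, hlen⟩ := (cycleGraph_isContained_iff (by omega)).1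
    (cycleGraph_isContained_of_periodic hwper hwinj hadj)
  have := ((G i).egirth_le_length hc).trans_lt' (hgirth i)
  rw [hlen] at this
  norm_cast at this
  omega

section Tripartite

variable {α β : Type*} [DecidableEq α] [DecidableEq β]

def IsTripartiteBy (c : α → Fin 3) (E : Finset (Finset α)) : Prop :=
  ∀ e ∈ E, ∃ x y z, c x = 0 ∧ c y = 1 ∧ c z = 2 ∧ e = {x, y, z}

lemma IsTripartiteBy.map_equiv {c : α → Fin 3} {E : Finset (Finset α)} (h : IsTripartiteBy c E)
    (e : α ≃ β) : IsTripartiteBy (c ∘ e.symm) (E.map (Equiv.finsetCongr e).toEmbedding) := by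
  simp only [IsTripartiteBy, mem_map, forall_exists_index, and_imp]
  rintro _ s hs rfl
  obtain ⟨x, y, z, hx, hy, hz, rfl⟩ := h s hs
  exact ⟨e x, e y, e z, by simpa, by simpa, by simpa, by simp⟩

lemma IsTripartiteBy.exists_partition [Fintype α] {c : α → Fin 3} {E : Finset (Finset α)}
    (h : IsTripartiteBy c E) :
    ∃ X Y Z : Finset α, Disjoint X Y ∧ Disjoint X Z ∧ Disjoint Y Z ∧ X ∪ Y ∪ Z = univ ∧
      ∀ e ∈ E, ∃ x ∈ X, ∃ y ∈ Y, ∃ z ∈ Z, e = {x, y, z} := by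
  refine ⟨univ.filter (c · = 0), univ.filter (c · = 1), univ.filter (c · = 2),
    ?_, ?_, ?_, ?_, fun e he => ?_⟩
  iterate 3 exact disjoint_filter.2 fun x _ h₁ h₂ => by simp [h₁] at h₂
  · ext x
    simp only [mem_union, mem_filter, mem_univ, true_and, iff_true]
    generalize c x = y
    fin_cases y <;> simp
  · obtain ⟨x, y, z, hx, hy, hz, rfl⟩ := h e he
    exact ⟨x, by simpa, y, by simpa, z, by simpa, rfl⟩

lemma isTripartiteBy_blowUp {ι : Type*} [DecidableEq ι] [Fintype ι]
    {G : ι → SimpleGraph (α ⊕ β)} [∀ i, Fintype (G i).edgeSet] {k : ℕ}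
    (hsub : ∀ i, G i ≤ completeBipartiteGraph α β) :
    IsTripartiteBy (Sum.elim (Sum.elim (fun _ => 0) fun _ => 1) fun _ => 2) (blowUp G k) := by
  intro e he
  obtain ⟨i, j, u, w, huw, rfl⟩ := mem_blowUp.1 he
  rcases u with a | b <;> rcases w with a' | b'
  all_goals have := hsub i huw
  all_goals simp at this
  · exact ⟨inl (inl a), inl (inr b'), inr (i, j), rfl, rfl, rfl, by grind⟩
  · exact ⟨inl (inl a'), inl (inr b), inr (i, j), rfl, rfl, rfl, by grind⟩

end Tripartite

theorem exists_tripartite_tightCycleFree_general (n k t : ℕ) (hkt : k * t ≤ n)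
    (G : Fin t → SimpleGraph (Fin n ⊕ Fin n))
    (hsub : ∀ i, G i ≤ completeBipartiteGraph (Fin n) (Fin n))
    (hdisj : ∀ i j, i ≠ j → Disjoint ((G i).edgeSet) ((G j).edgeSet))
    (hgirth : ∀ i, ∀ x, ∀ w : (G i).Walk x x, w.IsCycle → ¬ w.length ≤ 2 * k) :
    ∃ m : ℕ, m ≤ 3 * n ∧
      ∃ X Y Z : Finset (Fin m), Disjoint X Y ∧ Disjoint X Z ∧ Disjoint Y Z ∧
        X ∪ Y ∪ Z = Finset.univ ∧
        ∃ E : Finset (Finset (Fin m)),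
          (∀ e ∈ E, ∃ x ∈ X, ∃ y ∈ Y, ∃ z ∈ Z, e = {x, y, z}) ∧
          TightCycleFree 3 (E : Set (Finset (Fin m))) ∧
          E.card = k * ∑ i : Fin t, (G i).edgeSet.ncard := by
  classical
  let e := Fintype.equivFin ((Fin n ⊕ Fin n) ⊕ Fin t × Fin k)
  have hegirth (i : Fin t) : 2 * k < (G i).egirth :=
    (ENat.add_one_le_iff (by exact_mod_cast ENat.natCast_ne_top (2 * k))).1 <|
      (G i).le_egirth.2 fun x w hw => by exact_mod_cast Nat.lt_of_not_le (hgirth i x w hw)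
  obtain ⟨X, Y, Z, hXY, hXZ, hYZ, hXYZ, hE⟩ :=
    ((isTripartiteBy_blowUp (k := k) hsub).map_equiv e).exists_partition
  refine ⟨_, ?_, X, Y, Z, hXY, hXZ, hYZ, hXYZ, _, hE, ?_, ?_⟩
  · simp only [Fintype.card_sum, Fintype.card_prod, Fintype.card_fin]
    nlinarith
  · rw [coe_map]
    exact (tightCycleFree_blowUp (fun i j => hdisj i j) hegirth).image_equiv e
  · simp only [card_map, card_blowUp, ← SimpleGraph.coe_edgeFinset, Set.ncard_coe_finset]

/-- Lemma 2: from `t` edge-disjoint subgraphs of `K_{n,n}` with no cycle of length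
at most `2k` (where `k*t ≤ n`), one gets a tight-cycle-free 3-partite 3-uniform
hypergraph on at most `3n` vertices with `k * Σᵢ |E(Gᵢ)|` hyperedges. -/
theorem exists_tripartite_tightCycleFree (n k t : ℕ) (hn : 0 < n) (hk : 0 < k)
    (ht : 0 < t) (hkt : k * t ≤ n)
    (G : Fin t → SimpleGraph (Fin n ⊕ Fin n))
    (hsub : ∀ i, G i ≤ completeBipartiteGraph (Fin n) (Fin n))
    (hdisj : ∀ i j, i ≠ j → Disjoint ((G i).edgeSet) ((G j).edgeSet))
    (hgirth : ∀ i, ∀ x, ∀ w : (G i).Walk x x, w.IsCycle → ¬ w.length ≤ 2 * k) :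
    ∃ m : ℕ, m ≤ 3 * n ∧
      ∃ X Y Z : Finset (Fin m), Disjoint X Y ∧ Disjoint X Z ∧ Disjoint Y Z ∧
        X ∪ Y ∪ Z = Finset.univ ∧
        ∃ E : Finset (Finset (Fin m)),
          (∀ e ∈ E, ∃ x ∈ X, ∃ y ∈ Y, ∃ z ∈ Z, e = {x, y, z}) ∧
          TightCycleFree 3 (E : Set (Finset (Fin m))) ∧
          E.card = k * ∑ i : Fin t, (G i).edgeSet.ncard :=
  exists_tripartite_tightCycleFree_general n k t hkt G hsub hdisj hgirth
end BlowUp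
end

section
/- Let r, r', k, t be positive integers. Suppose G_1, …, G_t are pairwise edge-disjoint r-uniform hypergraphs on a common vertex set, none of which contains a tight cycle of length at most rk, and H_1, …, H_t are pairwise edge-disjoint r'-uniform hypergraphs on a common vertex set disjoint from the first, none of which contains a tight cycle of length more than r'k. Then the (r+r')-uniform hypergraph whose edges are all sets e ∪ f with e ∈ E(G_i) and f ∈ E(H_i) for some common index i ∈ [t] is tight-cycle-free. -/
/-!
Lift a tight cycle of the union hypergraph to an `ℓ`-periodic sequence `u` on `ℕ` whose windows
`u '' [n, n + s)`, `s = r + r'`, are its edges. Every window has exactly `r` vertices in `A`, so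
comparing the windows at `n` and `n + 1` shows that `u n` and `u (n + s)` lie on the same side.
Hence consecutive windows share their `A`-part or their `B`-part, and edge-disjointness forces one
index `i` for all windows. The `A`-vertices in cyclic order then form a tight cycle of `G i` of some
length `a`, the `B`-vertices one of `H i` of length `b`, and double counting gives `a * s = ℓ * r`
and `b * s = ℓ * r'`. As `G i` has no short tight cycle, `a > r * k`, so `ℓ > s * k` and
`b > r' * k`, which `H i` forbids.
-/

open Finset Function

namespace Nat

variable {p : ℕ → Prop} [DecidablePred p] {ℓ s r : ℕ}

lemma count_add_eq_add_card_filter_Ico (n : ℕ) :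
    count p (n + s) = count p n + #{x ∈ Ico n (n + s) | p x} := by
  rw [count_add, count_eq_card_filter_range (fun k => p (n + k)), range_eq_Ico]
  congr 1
  have h := image_add_left_Ico 0 s n
  rw [add_zero] at h
  rw [← h, filter_image, Finset.card_image_of_injective _ (add_right_injective n)]

lemma filter_Ico_succ_eq (n : ℕ) (hn : ¬ p n) (hns : ¬ p (n + s)) :
    {x ∈ Ico (n + 1) (n + 1 + s) | p x} = {x ∈ Ico n (n + s) | p x} := by
  ext x
  simp only [mem_filter, mem_Ico]
  constructor
  · rintro ⟨⟨h1, h2⟩, hx⟩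
    have : x ≠ n + s := by rintro rfl; exact hns hx
    exact ⟨⟨by omega, by omega⟩, hx⟩
  · rintro ⟨⟨h1, h2⟩, hx⟩
    have : x ≠ n := by rintro rfl; exact hn hx
    exact ⟨⟨by omega, by omega⟩, hx⟩

lemma periodic_of_count_add_eq (h : ∀ n, count p (n + s) = count p n + r) : Periodic p s := by
  intro n
  have h1 := h (n + 1)
  rw [add_right_comm, count_succ, count_succ, h n] at h1
  by_cases hn : p n <;> by_cases hns : p (n + s) <;> simp_all

lemma count_add_period (hp : Periodic p ℓ) (n : ℕ) :
    count p (n + ℓ) = count p n + count p ℓ := by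
  rw [count_add']
  simp only [hp _]

lemma count_mul_of_count_add_eq {d c : ℕ} (h : ∀ n, count p (n + d) = count p n + c) (m : ℕ) :
    count p (m * d) = m * c := by
  induction m with
  | zero => simp
  | succ m ih => rw [succ_mul, h, ih, succ_mul]

lemma count_period_mul_eq (hp : Periodic p ℓ) (h : ∀ n, count p (n + s) = count p n + r) :
    count p ℓ * s = ℓ * r := by
  rw [mul_comm, ← count_mul_of_count_add_eq (count_add_period hp), mul_comm,
    count_mul_of_count_add_eq h]

lemma infinite_ofPred_of_periodic (hp : Periodic p ℓ) (ha : 0 < count p ℓ) :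
    (Set.ofPred p).Infinite := by
  intro hfin
  have := count_le_card hfin ((#hfin.toFinset + 1) * ℓ)
  rw [count_mul_of_count_add_eq (count_add_period hp)] at this
  nlinarith

lemma nth_add_count_period (hp : Periodic p ℓ) (ha : 0 < count p ℓ) (n : ℕ) :
    nth p (n + count p ℓ) = nth p n + ℓ := by
  have hinf := infinite_ofPred_of_periodic hp ha
  calc nth p (n + count p ℓ) = nth p (count p (nth p n + ℓ)) := by
        rw [count_add_period hp, count_nth_of_infinite hinf]
    _ = nth p n + ℓ := nth_count (by rw [hp]; exact nth_mem_of_infinite hinf n)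

lemma nth_modEq_nth_iff (hp : Periodic p ℓ) (ha : 0 < count p ℓ) {x y : ℕ} :
    nth p x ≡ nth p y [MOD ℓ] ↔ x ≡ y [MOD count p ℓ] := by
  have hinf := infinite_ofPred_of_periodic hp ha
  have hshift : ∀ n m, nth p (n + m * count p ℓ) = nth p n + m * ℓ := by
    intro n m
    induction m with
    | zero => simp
    | succ m ih => rw [succ_mul, ← add_assoc, nth_add_count_period hp ha, ih, succ_mul, add_assoc]
  have hmod : ∀ n, nth p n % ℓ = nth p (n % count p ℓ) := by
    intro n
    conv_lhs => rw [← mod_add_div' n (count p ℓ), hshift]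
    rw [add_mul_mod_self_right, mod_eq_of_lt (nth_lt_of_lt_count (mod_lt n ha))]
  simp only [ModEq, hmod, (nth_injective hinf).eq_iff]

lemma filter_Ico_nth_eq_image_nth (hinf : (Set.ofPred p).Infinite) {m : ℕ}
    (h : count p (nth p m + s) = m + r) :
    {x ∈ Ico (nth p m) (nth p m + s) | p x} = (Ico m (m + r)).image (nth p) := by
  ext x
  simp only [mem_filter, mem_Ico, mem_image]
  constructor
  · rintro ⟨⟨h1, h2⟩, hx⟩
    refine ⟨count p x, ⟨?_, ?_⟩, nth_count hx⟩
    · rwa [← nth_le_nth hinf, nth_count hx]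
    · rwa [← h, lt_nth_iff_count_lt hinf, nth_count hx]
  · rintro ⟨j, ⟨h1, h2⟩, rfl⟩
    refine ⟨⟨(nth_le_nth hinf).2 h1, ?_⟩, nth_mem_of_infinite hinf j⟩
    rwa [← lt_nth_iff_count_lt hinf, h]

end Nat

open Nat

section Sequence

variable {V : Type*}

lemma image_univ_fin_eq_image_Ico [DecidableEq V] (g : ℕ → V) (n r : ℕ) :
    univ.image (fun j : Fin r => g (n + j)) = (Ico n (n + r)).image g := by
  ext x
  simp only [mem_image, mem_univ, true_and, mem_Ico, Fin.exists_iff]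
  constructor
  · rintro ⟨j, hj, rfl⟩
    exact ⟨n + j, by omega, rfl⟩
  · rintro ⟨y, hy, rfl⟩
    exact ⟨y - n, by omega, by rw [Nat.add_sub_cancel' hy.1]⟩

lemma isTightCycleIn_iff_exists_nat [DecidableEq V] {r ℓ : ℕ} [NeZero ℓ]
    {E : Set (Finset V)} : IsTightCycleIn r ℓ E ↔
      ∃ u : ℕ → V, (∀ x y, u x = u y ↔ x ≡ y [MOD ℓ]) ∧ ∀ n, (Ico n (n + r)).image u ∈ E := by
  constructor
  · rintro ⟨v, hv, hE⟩
    refine ⟨fun n => v n, fun x y => by rw [hv.eq_iff, ZMod.natCast_eq_natCast_iff],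
      fun n => ?_⟩
    rw [← image_univ_fin_eq_image_Ico]
    simpa only [tightWindow, Nat.cast_add] using hE n
  · rintro ⟨u, hu, hE⟩
    have hu' : ∀ x y : ℕ, u x = u y ↔ (x : ZMod ℓ) = y := fun x y => by
      rw [hu, ZMod.natCast_eq_natCast_iff]
    refine ⟨fun m => u m.val, fun m m' h => by simpa [hu'] using h, fun m => ?_⟩
    have : tightWindow r (fun m : ZMod ℓ => u m.val) m
        = univ.image (fun j : Fin r => u (m.val + j)) := by
      unfold tightWindow
      congr 1
      funext j
      rw [hu']
      simp
    rw [this, image_univ_fin_eq_image_Ico]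
    exact hE _

lemma IsTightCycleIn.of_image [DecidableEq V] {W : Type*} [DecidableEq W] {f : W → V}
    (hf : Injective f) {r ℓ : ℕ} (hr : 0 < r) {E : Set (Finset W)}
    (h : IsTightCycleIn r ℓ (Finset.image f '' E)) : IsTightCycleIn r ℓ E := by
  obtain ⟨v, hv, hE⟩ := h
  choose e he hev using hE
  have hrange : ∀ m, ∃ w, f w = v m := by
    intro m
    have : v m ∈ tightWindow r v m := mem_image.2 ⟨⟨0, hr⟩, mem_univ _, by simp⟩
    obtain ⟨w, -, hw⟩ := mem_image.1 ((hev m).symm ▸ this)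
    exact ⟨w, hw⟩
  choose w hw using hrange
  refine ⟨w, fun m m' h => hv (by rw [← hw, ← hw, h]), fun m => ?_⟩
  have : (tightWindow r w m).image f = tightWindow r v m := by
    simp only [tightWindow, image_image, comp_def, hw]
  rw [image_injective hf (this.trans (hev m).symm)]
  exact he m

variable {u : ℕ → V} {ℓ s : ℕ}

lemma injOn_Ico_of_modEq (hu : ∀ x y, u x = u y ↔ x ≡ y [MOD ℓ]) (hs : s ≤ ℓ)
    (n : ℕ) : Set.InjOn u (Ico n (n + s)) := by
  intro x hx y hy h
  simp only [coe_Ico, Set.mem_Ico] at hx hy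
  rw [hu] at h
  rcases le_total x y with hxy | hxy
  · have := Nat.eq_zero_of_dvd_of_lt ((Nat.modEq_iff_dvd' hxy).1 h) (by omega)
    omega
  · have := Nat.eq_zero_of_dvd_of_lt ((Nat.modEq_iff_dvd' hxy).1 h.symm) (by omega)
    omega

lemma periodic_of_modEq (hu : ∀ x y, u x = u y ↔ x ≡ y [MOD ℓ]) (q : V → Prop) :
    Periodic (fun k => q (u k)) ℓ := fun n => by
  simp only [(hu _ _).2 Nat.add_modEq_right]

lemma count_add_eq_add_card_filter_image_Ico [DecidableEq V]
    (hu : ∀ x y, u x = u y ↔ x ≡ y [MOD ℓ]) (hs : s ≤ ℓ) (q : V → Prop)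
    [DecidablePred q] (n : ℕ) : count (fun k => q (u k)) (n + s) =
      count (fun k => q (u k)) n + #{x ∈ (Ico n (n + s)).image u | q x} := by
  rw [filter_image, count_add_eq_add_card_filter_Ico,
    Finset.card_image_of_injOn ((injOn_Ico_of_modEq hu hs n).mono (filter_subset _ _))]

/-- The cycle runs through the vertices satisfying `q`, enumerated along `u` by `Nat.nth`. -/
theorem isTightCycleIn_count_of_filter_mem [DecidableEq V] [NeZero ℓ]
    (hu : ∀ x y, u x = u y ↔ x ≡ y [MOD ℓ]) {r : ℕ} (hr : 0 < r)
    (q : V → Prop) [DecidablePred q]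
    (hcount : ∀ n, count (fun k => q (u k)) (n + s) = count (fun k => q (u k)) n + r)
    {E : Set (Finset V)} (hE : ∀ n, {x ∈ (Ico n (n + s)).image u | q x} ∈ E) :
    IsTightCycleIn r (count (fun k => q (u k)) ℓ) E := by
  have hp := periodic_of_modEq hu q
  have ha : 0 < count (fun k => q (u k)) ℓ := by
    have := count_period_mul_eq hp hcount
    refine Nat.pos_of_ne_zero fun h => ?_
    simp [h, NeZero.ne ℓ, hr.ne'] at this
  have hinf := infinite_ofPred_of_periodic hp ha
  have : NeZero (count (fun k => q (u k)) ℓ) := ⟨ha.ne'⟩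
  refine isTightCycleIn_iff_exists_nat.2
    ⟨u ∘ nth _, fun x y => (hu _ _).trans (nth_modEq_nth_iff hp ha), fun m => ?_⟩
  rw [← image_image, ← filter_Ico_nth_eq_image_nth hinf
    (by rw [hcount, count_nth_of_infinite hinf]), ← filter_image]
  exact hE _

end Sequence

section Sum

variable {A B : Type*} [DecidableEq A] [DecidableEq B] {u : ℕ → A ⊕ B} {ℓ s : ℕ}

lemma filter_isLeft_image_inl_union_image_inr (e : Finset A) (f : Finset B) :
    {x ∈ e.image Sum.inl ∪ f.image Sum.inr | x.isLeft} = e.image Sum.inl := by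
  simp [filter_union, filter_image]

lemma filter_isRight_image_inl_union_image_inr (e : Finset A) (f : Finset B) :
    {x ∈ e.image Sum.inl ∪ f.image Sum.inr | x.isRight} = f.image Sum.inr := by
  simp [filter_union, filter_image]

lemma count_isLeft_add (hu : ∀ x y, u x = u y ↔ x ≡ y [MOD ℓ]) (hs : s ≤ ℓ) {n : ℕ}
    {e : Finset A} {f : Finset B}
    (hW : (Ico n (n + s)).image u = e.image Sum.inl ∪ f.image Sum.inr) :
    count (fun k => (u k).isLeft) (n + s) = count (fun k => (u k).isLeft) n + #e := by
  rw [count_add_eq_add_card_filter_image_Ico hu hs (fun x => x.isLeft), hW,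
    filter_isLeft_image_inl_union_image_inr, Finset.card_image_of_injective _ Sum.inl_injective]

lemma count_isRight_add (hu : ∀ x y, u x = u y ↔ x ≡ y [MOD ℓ]) (hs : s ≤ ℓ) {n : ℕ}
    {e : Finset A} {f : Finset B}
    (hW : (Ico n (n + s)).image u = e.image Sum.inl ∪ f.image Sum.inr) :
    count (fun k => (u k).isRight) (n + s) = count (fun k => (u k).isRight) n + #f := by
  rw [count_add_eq_add_card_filter_image_Ico hu hs (fun x => x.isRight), hW,
    filter_isRight_image_inl_union_image_inr, Finset.card_image_of_injective _ Sum.inr_injective]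

lemma isTightCycleIn_count_isLeft [NeZero ℓ] (hu : ∀ x y, u x = u y ↔ x ≡ y [MOD ℓ])
    {r : ℕ} (hr : 0 < r)
    (hcount : ∀ n, count (fun k => (u k).isLeft) (n + s) = count (fun k => (u k).isLeft) n + r)
    {E : Set (Finset A)}
    (hW : ∀ n, ∃ e ∈ E, ∃ f : Finset B,
      (Ico n (n + s)).image u = e.image Sum.inl ∪ f.image Sum.inr) :
    IsTightCycleIn r (count (fun k => (u k).isLeft) ℓ) E := by
  refine (isTightCycleIn_count_of_filter_mem hu hr (fun x => x.isLeft) hcount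
    (E := Finset.image Sum.inl '' E)
    fun n => ?_).of_image Sum.inl_injective hr
  obtain ⟨e, he, f, hef⟩ := hW n
  exact ⟨e, he, by rw [hef, filter_isLeft_image_inl_union_image_inr]⟩

lemma isTightCycleIn_count_isRight [NeZero ℓ] (hu : ∀ x y, u x = u y ↔ x ≡ y [MOD ℓ])
    {r : ℕ} (hr : 0 < r)
    (hcount : ∀ n, count (fun k => (u k).isRight) (n + s) = count (fun k => (u k).isRight) n + r)
    {E : Set (Finset B)}
    (hW : ∀ n, ∃ f ∈ E, ∃ e : Finset A,
      (Ico n (n + s)).image u = e.image Sum.inl ∪ f.image Sum.inr) :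
    IsTightCycleIn r (count (fun k => (u k).isRight) ℓ) E := by
  refine (isTightCycleIn_count_of_filter_mem hu hr (fun x => x.isRight) hcount
    (E := Finset.image Sum.inr '' E)
    fun n => ?_).of_image Sum.inr_injective hr
  obtain ⟨f, hf, e, hef⟩ := hW n
  exact ⟨f, hf, by rw [hef, filter_isRight_image_inl_union_image_inr]⟩

/-- When `u n` and `u (n + s)` lie on the same side, the windows at `n` and `n + 1` have the same
part on the other side, and that part is an edge of only one member of the edge-disjoint family. -/
lemma index_eq_index_zero {ι : Type*} {G : ι → Set (Finset A)} {H : ι → Set (Finset B)}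
    (hG : Pairwise (Disjoint on G)) (hH : Pairwise (Disjoint on H))
    {σ : ℕ → ι} {e : ℕ → Finset A} {f : ℕ → Finset B}
    (he : ∀ n, e n ∈ G (σ n)) (hf : ∀ n, f n ∈ H (σ n))
    (hW : ∀ n, (Ico n (n + s)).image u = (e n).image Sum.inl ∪ (f n).image Sum.inr)
    (hper : Periodic (fun k => (u k).isLeft = true) s) (n : ℕ) : σ n = σ 0 := by
  have hstep : ∀ n, σ (n + 1) = σ n := by
    intro n
    have hs : (u (n + s)).isLeft = (u n).isLeft := by simpa using hper n
    by_cases hn : (u n).isLeft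
    · have hfW : ∀ m, (f m).image Sum.inr = {x ∈ (Ico m (m + s)).image u | x.isRight} :=
        fun m => by rw [hW, filter_isRight_image_inl_union_image_inr]
      have : f (n + 1) = f n := by
        apply image_injective (Sum.inr_injective (α := A))
        rw [hfW, hfW, filter_image, filter_image, filter_Ico_succ_eq] <;>
          simpa only [Sum.not_isRight, hs] using hn
      exact hH.eq (Set.not_disjoint_iff.2 ⟨f n, this ▸ hf (n + 1), hf n⟩)
    · have heW : ∀ m, (e m).image Sum.inl = {x ∈ (Ico m (m + s)).image u | x.isLeft} :=
        fun m => by rw [hW, filter_isLeft_image_inl_union_image_inr]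
      have : e (n + 1) = e n := by
        apply image_injective (Sum.inl_injective (β := B))
        rw [heW, heW, filter_image, filter_image, filter_Ico_succ_eq] <;> simpa only [hs] using hn
      exact hG.eq (Set.not_disjoint_iff.2 ⟨e n, this ▸ he (n + 1), he n⟩)
  induction n with
  | zero => rfl
  | succ n ih => rw [hstep, ih]

end Sum

lemma mul_lt_of_mul_lt_of_mul_eq {a b ℓ s r r' k : ℕ} (hr' : 0 < r') (hs : 0 < s)
    (ha : a * s = ℓ * r) (hb : b * s = ℓ * r') (hak : r * k < a) : r' * k < b := by
  have hks : k * s < ℓ := Nat.lt_of_mul_lt_mul_left (a := r) <| by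
    rw [← mul_assoc, mul_comm r ℓ, ← ha]
    exact Nat.mul_lt_mul_of_pos_right hak hs
  exact Nat.lt_of_mul_lt_mul_right (a := s) <| by
    rw [hb, mul_assoc, mul_comm ℓ]
    exact Nat.mul_lt_mul_of_pos_left hks hr'

theorem union_construction_tightCycleFree_general {A B : Type*} [DecidableEq A] [DecidableEq B]
    (r r' k t : ℕ) (hr : 0 < r) (hr' : 0 < r')
    (G : Fin t → Set (Finset A)) (H : Fin t → Set (Finset B))
    (hGunif : ∀ i, ∀ e ∈ G i, e.card = r)
    (hHunif : ∀ i, ∀ f ∈ H i, f.card = r')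
    (hGdisj : ∀ i j, i ≠ j → Disjoint (G i) (G j))
    (hHdisj : ∀ i j, i ≠ j → Disjoint (H i) (H j))
    (hGshort : ∀ i, ∀ ℓ, r < ℓ → ℓ ≤ r * k → ¬ IsTightCycleIn r ℓ (G i))
    (hHlong : ∀ i, ∀ ℓ, r' < ℓ → r' * k < ℓ → ¬ IsTightCycleIn r' ℓ (H i)) :
    TightCycleFree (r + r')
      ({g | ∃ (i : Fin t) (e : Finset A) (f : Finset B), e ∈ G i ∧ f ∈ H i ∧
          g = e.image Sum.inl ∪ f.image Sum.inr} : Set (Finset (A ⊕ B))) := by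
  rintro ⟨ℓ, hℓ, hcyc⟩
  have : NeZero ℓ := ⟨by omega⟩
  obtain ⟨u, hu, hW⟩ := isTightCycleIn_iff_exists_nat.1 hcyc
  choose σ e f he hf hWef using hW
  have hcountL := fun n => (count_isLeft_add hu hℓ.le (hWef n)).trans (by rw [hGunif _ _ (he n)])
  have hcountR := fun n => (count_isRight_add hu hℓ.le (hWef n)).trans (by rw [hHunif _ _ (hf n)])
  have hσ := index_eq_index_zero hGdisj hHdisj he hf hWef (periodic_of_count_add_eq hcountL)
  have hcycG := isTightCycleIn_count_isLeft hu hr hcountL (E := G (σ 0))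
    fun n => ⟨e n, hσ n ▸ he n, f n, hWef n⟩
  have hcycH := isTightCycleIn_count_isRight hu hr' hcountR (E := H (σ 0))
    fun n => ⟨f n, hσ n ▸ hf n, e n, hWef n⟩
  have hL := count_period_mul_eq (periodic_of_modEq hu (fun x => x.isLeft)) hcountL
  have hR := count_period_mul_eq (periodic_of_modEq hu (fun x => x.isRight)) hcountR
  have hrL : r < count (fun j => (u j).isLeft) ℓ := by nlinarith
  have hrR : r' < count (fun j => (u j).isRight) ℓ := by nlinarith
  have hkL : r * k < count (fun j => (u j).isLeft) ℓ := not_le.1 fun h => hGshort _ _ hrL h hcycG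
  exact hHlong _ _ hrR (mul_lt_of_mul_lt_of_mul_eq hr' (by omega) hL hR hkL) hcycH

/-- Generalisation of Lemma 2: if the `Gᵢ` are edge-disjoint `r`-uniform hypergraphs
with no tight cycle of length at most `r*k`, and the `Hᵢ` are edge-disjoint
`r'`-uniform hypergraphs (on a disjoint vertex set) with no tight cycle of length
more than `r'*k`, then the `(r+r')`-uniform hypergraph with edges `e ∪ f`,
`e ∈ E(Gᵢ)`, `f ∈ E(Hᵢ)`, is tight-cycle-free. -/
theorem union_construction_tightCycleFree {A B : Type*} [DecidableEq A] [DecidableEq B]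
    (r r' k t : ℕ) (hr : 0 < r) (hr' : 0 < r') (hk : 0 < k) (ht : 0 < t)
    (G : Fin t → Set (Finset A)) (H : Fin t → Set (Finset B))
    (hGunif : ∀ i, ∀ e ∈ G i, e.card = r)
    (hHunif : ∀ i, ∀ f ∈ H i, f.card = r')
    (hGdisj : ∀ i j, i ≠ j → Disjoint (G i) (G j))
    (hHdisj : ∀ i j, i ≠ j → Disjoint (H i) (H j))
    (hGshort : ∀ i, ∀ ℓ, r < ℓ → ℓ ≤ r * k → ¬ IsTightCycleIn r ℓ (G i))
    (hHlong : ∀ i, ∀ ℓ, r' < ℓ → r' * k < ℓ → ¬ IsTightCycleIn r' ℓ (H i)) :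
    TightCycleFree (r + r')
      ({g | ∃ (i : Fin t) (e : Finset A) (f : Finset B), e ∈ G i ∧ f ∈ H i ∧
          g = e.image Sum.inl ∪ f.image Sum.inr} : Set (Finset (A ⊕ B))) :=
  union_construction_tightCycleFree_general r r' k t hr hr' G H hGunif hHunif hGdisj hHdisj hGshort
    hHlong
end

section
/- There exists a constant α > 0 such that for every ε > 0 there is an N so that for all n ≥ N and all positive integers k ≤ α · log n / log log n, setting t = ⌊n/k⌋, there exist pairwise edge-disjoint subgraphs G_1, …, G_t of K_{n,n} such that no G_i contains a cycle of length at most 2k, and Σ_{i=1}^{t} |E(G_i)| ≥ (1 − ε) n². -/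
/-!
Colour every pair of vertices of `K_{n,n}` with one of `t = ⌊n/k⌋` colours. For a fixed injective
`m`-tuple of the `2n ≤ 4kt` vertices, its `m` cyclic edges are all of a given colour with
probability `t⁻ᵐ`, so on average there are at most `t (4k)ᵐ` monochromatic `m`-cycles. Hence some
colouring has at most `2k (4k)^(2k) t` monochromatic cycles of length at most `2k`; deleting one
edge of each leaves `t` colour classes without such cycles that miss at most `(4k)^(2k+1) n` edges
of `K_{n,n}`. For `k ≤ log n / (12 log log n)` we have `(4k)^(2k+1) ≤ √n`, which is `≤ εn` once
`n ≥ ε⁻²`.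
-/

open Finset

lemma card_filter_forall_mem_eq_const {α β : Type*} [Fintype α] [DecidableEq α] [Fintype β]
    [DecidableEq β] (s : Finset α) (b : β) :
    #{c : α → β | ∀ a ∈ s, c a = b} = Fintype.card β ^ (Fintype.card α - #s) := by
  have hpi : ({c : α → β | ∀ a ∈ s, c a = b} : Finset _) =
      Fintype.piFinset fun a => if a ∈ s then {b} else univ := by
    ext c
    simp only [mem_filter, mem_univ, true_and, Fintype.mem_piFinset]
    refine forall_congr' fun a => ?_
    split_ifs with ha <;> simp [ha]
  rw [hpi, Fintype.card_piFinset]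
  simp only [apply_ite card, card_singleton, card_univ, prod_ite, prod_const_one, one_mul,
    prod_const]
  rw [← card_compl, compl_eq_univ_sdiff, ← filter_notMem_eq_sdiff]

lemma exists_card_le_forall_exists_mem {ι α : Type*} [DecidableEq α] (s : Finset ι)
    (F : ι → Finset α) (hF : ∀ x ∈ s, (F x).Nonempty) :
    ∃ D : Finset α, #D ≤ #s ∧ ∀ x ∈ s, ∃ e ∈ F x, e ∈ D := by
  choose f hf using hF
  exact ⟨s.attach.image fun x => f x.1 x.2, card_image_le.trans card_attach.le,
    fun x hx => ⟨f x hx, hf x hx, mem_image_of_mem _ (mem_attach _ ⟨x, hx⟩)⟩⟩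

namespace SimpleGraph

lemma card_edgeFinset_cycleGraph {m : ℕ} (hm : 3 ≤ m) : #(cycleGraph m).edgeFinset = m := by
  obtain ⟨m, rfl⟩ : ∃ k, m = k + 3 := ⟨m - 3, by omega⟩
  have := sum_degrees_eq_twice_card_edges (cycleGraph (m + 3))
  simp only [cycleGraph_degree_three_le, sum_const, card_univ, Fintype.card_fin,
    smul_eq_mul] at this
  omega

lemma ncard_edgeSet_completeBipartiteGraph (W₁ W₂ : Type*) [Fintype W₁] [Fintype W₂] :
    (completeBipartiteGraph W₁ W₂).edgeSet.ncard = Fintype.card W₁ * Fintype.card W₂ := by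
  rw [Set.ncard_def, encard_edgeSet_completeBipartiteGraph, ENat.card_eq_coe_fintype_card,
    ENat.card_eq_coe_fintype_card, ← Nat.cast_mul, ENat.toNat_natCast]

section MonoCopies

variable {V W β : Type*} [Fintype V] [DecidableEq V] [Fintype W] [DecidableEq W]
  [Fintype β] [DecidableEq β]

def monoCopies (A : SimpleGraph W) [DecidableRel A.Adj] (c : Sym2 V → β) (b : β) :
    Finset (W → V) :=
  {p | Function.Injective p ∧ ∀ e ∈ A.edgeFinset, c (e.map p) = b}

lemma pow_mul_card_filter_mem_monoCopies_le (A : SimpleGraph W) [DecidableRel A.Adj]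
    (p : W → V) (b : β) :
    Fintype.card β ^ #A.edgeFinset * #{c : Sym2 V → β | p ∈ A.monoCopies c b} ≤
      Fintype.card β ^ Fintype.card (Sym2 V) := by
  by_cases hp : Function.Injective p
  · have hE : #(A.edgeFinset.image (Sym2.map p)) = #A.edgeFinset :=
      card_image_of_injective _ (Sym2.map.injective hp)
    have hcount := card_filter_forall_mem_eq_const (A.edgeFinset.image (Sym2.map p)) b
    simp only [forall_mem_image, hE] at hcount
    have hEM : #A.edgeFinset ≤ Fintype.card (Sym2 V) := hE ▸ card_le_univ _
    simp only [monoCopies, mem_filter, mem_univ, hp, true_and, hcount, ← pow_add,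
      Nat.add_sub_cancel' hEM, le_refl]
  · simp [monoCopies, hp]

/-- The first moment of the number of copies of `A` of colour `b` under a uniformly random
colouring is at most `|V| ^ |W| / |β| ^ |E(A)|`; stated multiplied out to stay in `ℕ`. -/
lemma pow_mul_sum_card_monoCopies_le (A : SimpleGraph W) [DecidableRel A.Adj] (b : β) :
    Fintype.card β ^ #A.edgeFinset * ∑ c : Sym2 V → β, #(A.monoCopies c b) ≤
      Fintype.card V ^ Fintype.card W * Fintype.card β ^ Fintype.card (Sym2 V) :=
  calc Fintype.card β ^ #A.edgeFinset * ∑ c : Sym2 V → β, #(A.monoCopies c b)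
      = ∑ p : W → V,
          Fintype.card β ^ #A.edgeFinset * #{c : Sym2 V → β | p ∈ A.monoCopies c b} := by
        have hswap : ∑ c : Sym2 V → β, #(A.monoCopies c b) =
            ∑ p : W → V, #{c : Sym2 V → β | p ∈ A.monoCopies c b} := by
          simp only [card_eq_sum_ones]
          exact sum_comm' fun c p => by simp
        rw [hswap, mul_sum]
    _ ≤ ∑ _p : W → V, Fintype.card β ^ Fintype.card (Sym2 V) :=
        sum_le_sum fun p _ => pow_mul_card_filter_mem_monoCopies_le A p b
    _ = _ := by simp

end MonoCopies

section Girth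

variable {V : Type*} [Fintype V] [DecidableEq V]

lemma sum_card_monoCopies_cycleGraph_le {t a m : ℕ} (ht : 0 < t) (hm : 3 ≤ m)
    (hV : Fintype.card V ≤ a * t) (i : Fin t) :
    ∑ c : Sym2 V → Fin t, #((cycleGraph m).monoCopies c i) ≤
      a ^ m * t ^ Fintype.card (Sym2 V) := by
  refine Nat.le_of_mul_le_mul_left ?_ (pow_pos ht m)
  calc t ^ m * ∑ c : Sym2 V → Fin t, #((cycleGraph m).monoCopies c i)
      ≤ Fintype.card V ^ m * t ^ Fintype.card (Sym2 V) := by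
        simpa [card_edgeFinset_cycleGraph hm] using
          pow_mul_sum_card_monoCopies_le (cycleGraph m) i
    _ ≤ (a * t) ^ m * t ^ Fintype.card (Sym2 V) := by gcongr
    _ = t ^ m * (a ^ m * t ^ Fintype.card (Sym2 V)) := by ring

lemma exists_coloring_sum_card_monoCopies_cycleGraph_le {t a : ℕ} (L : ℕ) (ht : 0 < t)
    (ha : 0 < a) (hV : Fintype.card V ≤ a * t) :
    ∃ c : Sym2 V → Fin t,
      ∑ m ∈ Icc 3 L, ∑ i, #((cycleGraph m).monoCopies c i) ≤ L * a ^ L * t := by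
  have : NeZero t := ⟨ht.ne'⟩
  suffices hsum : ∑ c : Sym2 V → Fin t, ∑ m ∈ Icc 3 L, ∑ i, #((cycleGraph m).monoCopies c i) ≤
      ∑ _c : Sym2 V → Fin t, L * a ^ L * t by
    obtain ⟨c, -, hc⟩ := exists_le_of_sum_le univ_nonempty hsum
    exact ⟨c, hc⟩
  calc ∑ c : Sym2 V → Fin t, ∑ m ∈ Icc 3 L, ∑ i, #((cycleGraph m).monoCopies c i)
      = ∑ m ∈ Icc 3 L, ∑ i, ∑ c : Sym2 V → Fin t, #((cycleGraph m).monoCopies c i) := by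
        rw [sum_comm]
        exact sum_congr rfl fun m _ => sum_comm
    _ ≤ ∑ _m ∈ Icc 3 L, ∑ _i : Fin t, a ^ L * t ^ Fintype.card (Sym2 V) := by
        gcongr with m hm i
        obtain ⟨hm3, hmL⟩ := mem_Icc.mp hm
        exact (sum_card_monoCopies_cycleGraph_le ht hm3 hV i).trans
          (Nat.mul_le_mul_right _ (Nat.pow_le_pow_right ha hmL))
    _ ≤ L * t * (a ^ L * t ^ Fintype.card (Sym2 V)) := by
        simp only [sum_const, card_univ, Fintype.card_fin, smul_eq_mul, Nat.card_Icc,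
          ← mul_assoc]
        gcongr
        omega
    _ = ∑ _c : Sym2 V → Fin t, L * a ^ L * t := by
        simp only [sum_const, card_univ, Fintype.card_fun, Fintype.card_fin, smul_eq_mul]
        ring

lemma ncard_edgeSet_le_sum_ncard_deleteEdges_add_card {β : Type*} [Fintype β]
    (H : SimpleGraph V) (c : Sym2 V → β) (D : Finset (Sym2 V)) :
    H.edgeSet.ncard ≤ ∑ i, (H.deleteEdges {e | c e ≠ i ∨ e ∈ D}).edgeSet.ncard + #D := by
  have hcover : H.edgeSet ⊆ (⋃ i, (H.deleteEdges {e | c e ≠ i ∨ e ∈ D}).edgeSet) ∪ ↑D := by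
    intro e he
    by_cases heD : e ∈ D
    · exact Or.inr heD
    · refine Or.inl (Set.mem_iUnion.mpr ⟨c e, ?_⟩)
      simp [edgeSet_deleteEdges, he, heD]
  calc H.edgeSet.ncard
      ≤ ((⋃ i, (H.deleteEdges {e | c e ≠ i ∨ e ∈ D}).edgeSet) ∪ ↑D).ncard :=
        Set.ncard_le_ncard hcover (Set.toFinite _)
    _ ≤ (⋃ i, (H.deleteEdges {e | c e ≠ i ∨ e ∈ D}).edgeSet).ncard +
          (D : Set (Sym2 V)).ncard :=
        Set.ncard_union_le _ _
    _ ≤ _ := by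
        rw [Set.ncard_coe_finset]
        gcongr
        exact Set.ncard_iUnion_le_of_fintype _

lemma lt_length_of_isCycle_deleteEdges {β : Type*} [DecidableEq β] {H : SimpleGraph V}
    {c : Sym2 V → β} {D : Finset (Sym2 V)} {L : ℕ} {i : β}
    (hD : ∀ m ∈ Icc 3 L, ∀ p ∈ (cycleGraph m).monoCopies c i,
      ∃ e ∈ (cycleGraph m).edgeFinset, e.map p ∈ D)
    {x : V} (w : (H.deleteEdges {e | c e ≠ i ∨ e ∈ D}).Walk x x) (hw : w.IsCycle) :
    L < w.length := by
  by_contra! hle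
  obtain ⟨f⟩ := (cycleGraph_isContained_iff hw.three_le_length).mpr ⟨x, w, hw, rfl⟩
  have hf (e) (he : e ∈ (cycleGraph w.length).edgeFinset) : c (e.map f) = i ∧ e.map f ∉ D := by
    have := f.toHom.map_mem_edgeSet (mem_edgeFinset.mp he)
    simp_all [edgeSet_deleteEdges]
  obtain ⟨e, he, heD⟩ := hD w.length (mem_Icc.mpr ⟨hw.three_le_length, hle⟩) f
    (mem_filter.mpr ⟨mem_univ _, f.injective, fun e he => (hf e he).1⟩)
  exact (hf e he).2 heD

theorem exists_edgeDisjoint_subgraphs_lt_length_of_isCycle (H : SimpleGraph V) {t a : ℕ}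
    (L : ℕ) (ht : 0 < t) (ha : 0 < a) (hV : Fintype.card V ≤ a * t) :
    ∃ G : Fin t → SimpleGraph V, (∀ i, G i ≤ H) ∧
      Pairwise (fun i j => Disjoint (G i).edgeSet (G j).edgeSet) ∧
      (∀ i x (w : (G i).Walk x x), w.IsCycle → L < w.length) ∧
      H.edgeSet.ncard ≤ ∑ i, (G i).edgeSet.ncard + L * a ^ L * t := by
  obtain ⟨c, hc⟩ := exists_coloring_sum_card_monoCopies_cycleGraph_le L ht ha hV
  let bad := (Icc 3 L).sigma fun m => univ.sigma fun i => (cycleGraph m).monoCopies c i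
  obtain ⟨D, hDcard, hD⟩ := exists_card_le_forall_exists_mem bad
    (fun x => (cycleGraph x.1).edgeFinset.image (Sym2.map x.2.2)) fun ⟨m, i, p⟩ hx => by
      simp only [bad, mem_sigma, mem_Icc, mem_univ, true_and] at hx
      refine Nonempty.image (card_pos.mp ?_) _
      rw [card_edgeFinset_cycleGraph hx.1.1]
      omega
  refine ⟨fun i => H.deleteEdges {e | c e ≠ i ∨ e ∈ D}, fun i => deleteEdges_le _,
    fun i j hij => Set.disjoint_left.mpr fun e hi hj => ?_,
    fun i x w hw => lt_length_of_isCycle_deleteEdges (fun m hm p hp => ?_) w hw, ?_⟩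
  · simp only [edgeSet_deleteEdges, Set.mem_sdiff, Set.mem_ofPred_eq, not_or, not_not] at hi hj
    exact hij (hi.2.1.symm.trans hj.2.1)
  · obtain ⟨_, hmem, heD⟩ := hD ⟨m, i, p⟩ (mem_sigma.mpr ⟨hm, mem_sigma.mpr ⟨mem_univ _, hp⟩⟩)
    obtain ⟨e, he, rfl⟩ := mem_image.mp hmem
    exact ⟨e, he, heD⟩
  · calc H.edgeSet.ncard
        ≤ ∑ i, (H.deleteEdges {e | c e ≠ i ∨ e ∈ D}).edgeSet.ncard + #D :=
          ncard_edgeSet_le_sum_ncard_deleteEdges_add_card H c D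
      _ ≤ ∑ i, (H.deleteEdges {e | c e ≠ i ∨ e ∈ D}).edgeSet.ncard + L * a ^ L * t := by
          gcongr
          refine hDcard.trans (le_of_eq_of_le ?_ hc)
          simp only [bad, card_sigma]

end Girth

end SimpleGraph

section Estimates

open Real

lemma one_le_log_four : 1 ≤ log 4 := by
  rw [le_log_iff_exp_le (by norm_num)]
  linarith [exp_one_lt_d9]

lemma log_four_le_log_log {x : ℝ} (hx : exp 4 ≤ x) : log 4 ≤ log (log x) :=
  log_le_log (by norm_num) ((le_log_iff_exp_le ((exp_pos 4).trans_le hx)).mpr hx)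

lemma mul_log_log_le_of_le_div {x k : ℝ} (hx : exp 4 ≤ x)
    (hk : k ≤ 1 / 12 * log x / log (log x)) : 12 * k * log (log x) ≤ log x := by
  have hloglog : 0 < log (log x) :=
    zero_lt_one.trans_le (one_le_log_four.trans (log_four_le_log_log hx))
  rw [le_div_iff₀ hloglog] at hk
  linarith

lemma le_log_of_le_div_log_log {x k : ℝ} (hx : exp 4 ≤ x) (hk0 : 0 ≤ k)
    (hk : k ≤ 1 / 12 * log x / log (log x)) : k ≤ log x := by
  nlinarith [mul_log_log_le_of_le_div hx hk, one_le_log_four, log_four_le_log_log hx]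

lemma four_mul_pow_sq_le {x : ℝ} {k : ℕ} (hx : exp 4 ≤ x) (hk : 0 < k)
    (hkx : (k : ℝ) ≤ 1 / 12 * log x / log (log x)) : ((4 * k : ℝ) ^ (2 * k + 1)) ^ 2 ≤ x := by
  have hk1 : (1 : ℝ) ≤ k := by exact_mod_cast hk
  have hlog4k : log (4 * k) ≤ 2 * log (log x) := by
    rw [log_mul (by norm_num) (by positivity)]
    linarith [log_le_log (by positivity) (le_log_of_le_div_log_log hx k.cast_nonneg hkx),
      log_four_le_log_log hx]
  have hlog4k0 : 0 ≤ log (4 * k) := log_nonneg (by linarith)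
  rw [← log_le_log_iff (by positivity) ((exp_pos 4).trans_le hx), ← pow_mul, log_pow]
  calc ((2 * k + 1) * 2 : ℕ) * log (4 * k) ≤ 6 * k * log (4 * k) := by
        gcongr; push_cast; linarith
    _ ≤ 6 * k * (2 * log (log x)) := by gcongr
    _ ≤ log x := by linarith [mul_log_log_le_of_le_div hx hkx]

lemma le_mul_of_sq_le {x y ε : ℝ} (hε : 0 < ε) (hy : 0 ≤ y) (hyx : y ^ 2 ≤ x)
    (hεx : ε⁻¹ ^ 2 ≤ x) : y ≤ ε * x := by
  have hx : 0 ≤ x := (sq_nonneg y).trans hyx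
  have h1 : 1 ≤ ε ^ 2 * x := by
    rwa [inv_pow, inv_le_iff_one_le_mul₀ (by positivity), mul_comm] at hεx
  refine (pow_le_pow_iff_left₀ hy (by positivity) two_ne_zero).mp ?_
  calc y ^ 2 ≤ x := hyx
    _ ≤ (ε ^ 2 * x) * x := le_mul_of_one_le_left hx h1
    _ = (ε * x) ^ 2 := by ring

lemma two_mul_le_four_mul_mul_div {n k : ℕ} (hk : 0 < k) (hkn : k ≤ n) :
    2 * n ≤ 4 * k * (n / k) := by
  have h1 := Nat.lt_mul_div_succ n hk
  have h2 := Nat.le_mul_of_pos_right k (Nat.div_pos hkn hk)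
  linarith

lemma cast_two_mul_mul_pow_mul_div_le {n k : ℕ} {ε : ℝ}
    (hpow : (4 * k : ℝ) ^ (2 * k + 1) ≤ ε * n) :
    ((2 * k * (4 * k) ^ (2 * k) * (n / k) : ℕ) : ℝ) ≤ ε * n ^ 2 := by
  have ht : ((n / k : ℕ) : ℝ) ≤ n := by exact_mod_cast Nat.div_le_self n k
  push_cast
  calc 2 * k * (4 * k : ℝ) ^ (2 * k) * ((n / k : ℕ) : ℝ)
      ≤ (4 * k : ℝ) ^ (2 * k + 1) * n := by
        rw [pow_succ']
        gcongr
        linarith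
    _ ≤ ε * n * n := by gcongr
    _ = ε * n ^ 2 := by ring

end Estimates

/-- Lemma 3: there is `α > 0` such that for `k ≤ α log n / log log n` and
`t = ⌊n/k⌋`, one can find edge-disjoint subgraphs `G₁, …, G_t` of `K_{n,n}` with no
cycle of length at most `2k` and `Σᵢ |E(Gᵢ)| ≥ (1 - ε) n²`. -/
theorem exists_edge_disjoint_large_girth_decomposition :
    ∃ α : ℝ, 0 < α ∧ ∀ ε : ℝ, 0 < ε → ∃ N : ℕ, ∀ n : ℕ, N ≤ n → ∀ k : ℕ, 0 < k →
      (k : ℝ) ≤ α * Real.log n / Real.log (Real.log n) →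
      ∃ G : Fin (n / k) → SimpleGraph (Fin n ⊕ Fin n),
        (∀ i, G i ≤ completeBipartiteGraph (Fin n) (Fin n)) ∧
        (∀ i j, i ≠ j → Disjoint ((G i).edgeSet) ((G j).edgeSet)) ∧
        (∀ i, ∀ x, ∀ w : (G i).Walk x x, w.IsCycle → ¬ w.length ≤ 2 * k) ∧
        (1 - ε) * (n : ℝ) ^ 2 ≤ ∑ i : Fin (n / k), ((G i).edgeSet.ncard : ℝ) := by
  refine ⟨1 / 12, by norm_num, fun ε hε => ⟨max ⌈Real.exp 4⌉₊ ⌈ε⁻¹ ^ 2⌉₊, ?_⟩⟩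
  intro n hn k hk hkn
  have hn4 : Real.exp 4 ≤ n := Nat.ceil_le.mp (le_of_max_le_left hn)
  have hpow : (4 * k : ℝ) ^ (2 * k + 1) ≤ ε * n := le_mul_of_sq_le hε (by positivity)
    (four_mul_pow_sq_le hn4 hk hkn) (Nat.ceil_le.mp (le_of_max_le_right hn))
  have hkn' : k ≤ n := by
    exact_mod_cast (le_log_of_le_div_log_log hn4 k.cast_nonneg hkn).trans
      (Real.log_le_self n.cast_nonneg)
  have hV : Fintype.card (Fin n ⊕ Fin n) ≤ 4 * k * (n / k) := by
    simpa only [Fintype.card_sum, Fintype.card_fin, ← two_mul] using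
      two_mul_le_four_mul_mul_div hk hkn'
  obtain ⟨G, hle, hdisj, hcyc, hcount⟩ :=
    SimpleGraph.exists_edgeDisjoint_subgraphs_lt_length_of_isCycle
      (completeBipartiteGraph (Fin n) (Fin n)) (2 * k) (Nat.div_pos hkn' hk) (by positivity) hV
  refine ⟨G, hle, fun i j hij => hdisj hij, fun i x w hw => (hcyc i x w hw).not_ge, ?_⟩
  rw [SimpleGraph.ncard_edgeSet_completeBipartiteGraph, Fintype.card_fin, ← sq] at hcount
  have hcount' : (n : ℝ) ^ 2 ≤ ∑ i, ((G i).edgeSet.ncard : ℝ) +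
      ((2 * k * (4 * k) ^ (2 * k) * (n / k) : ℕ) : ℝ) := by
    exact_mod_cast hcount
  linarith [cast_two_mul_mul_pow_mul_div_le hpow]
end

section
/- For every integer r ≥ 4 and every positive integer n, f_r(2n) ≥ n · f_{r−1}(n). -/
namespace TCAux

open Finset

/-- The defining set of `tightCycleTuran`. -/
def turanSet (r n : ℕ) : Set ℕ :=
  {m | ∃ E : Finset (Finset (Fin n)), (∀ e ∈ E, e.card = r) ∧
    TightCycleFree r (E : Set (Finset (Fin n))) ∧ E.card = m}

lemma tightCycleTuran_eq (r n : ℕ) : tightCycleTuran r n = sSup (turanSet r n) := rfl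

lemma turanSet_zero_mem (r n : ℕ) : 0 ∈ turanSet r n := by
  refine ⟨∅, by simp, ?_, by simp⟩
  rintro ⟨ℓ, hℓ, v, hv, hwin⟩
  simpa using hwin 0

lemma turanSet_bddAbove (r n : ℕ) : BddAbove (turanSet r n) := by
  refine ⟨Fintype.card (Finset (Fin n)), ?_⟩
  rintro m ⟨E, -, -, rfl⟩
  simpa using Finset.card_le_univ E

/-- Transport tight-cycle-freeness along an equivalence of vertex sets. -/
lemma tcf_image_equiv {V W : Type*} [DecidableEq V] [DecidableEq W] (σ : V ≃ W) (r : ℕ)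
    (E : Finset (Finset V)) (h : TightCycleFree r (E : Set (Finset V))) :
    TightCycleFree r ((E.image (Finset.image σ) : Finset (Finset W)) : Set (Finset W)) := by
  rintro ⟨ℓ, hℓ, v, hv, hwin⟩
  refine h ⟨ℓ, hℓ, σ.symm ∘ v, σ.symm.injective.comp hv, fun i => ?_⟩
  have h1 := hwin i
  rw [Finset.mem_coe, Finset.mem_image] at h1
  obtain ⟨A, hA, hAw⟩ := h1
  have h2 : tightWindow r (σ.symm ∘ v) i = Finset.image σ.symm (tightWindow r v i) := by
    unfold tightWindow
    rw [Finset.image_image]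
    rfl
  have h3 : Finset.image σ.symm (Finset.image σ A) = A := by
    rw [Finset.image_image]
    simp
  rw [Finset.mem_coe, h2, ← hAw, h3]
  exact hA

/-- The lift: edges `e ∪ {inr b}` for `e ∈ E` and `b : Fin n`. -/
def liftE {n : ℕ} (E : Finset (Finset (Fin n))) : Finset (Finset (Fin n ⊕ Fin n)) :=
  (E ×ˢ (Finset.univ : Finset (Fin n))).image
    (fun p => p.1.image Sum.inl ∪ {Sum.inr p.2})

lemma liftMap_inj (n : ℕ) : Function.Injective
    (fun p : Finset (Fin n) × Fin n =>
      p.1.image Sum.inl ∪ ({Sum.inr p.2} : Finset (Fin n ⊕ Fin n))) := by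
  rintro ⟨e, b⟩ ⟨e', b'⟩ h
  simp only at h
  have h1 : ∀ x : Fin n ⊕ Fin n,
      x ∈ e.image Sum.inl ∪ {Sum.inr b} ↔ x ∈ e'.image Sum.inl ∪ {Sum.inr b'} := fun x => by
    rw [h]
  simp only [Prod.mk.injEq]
  constructor
  · ext a
    have := h1 (Sum.inl a)
    simpa using this
  · have := (h1 (Sum.inr b)).1 (by simp)
    simpa using this

lemma liftE_card {n : ℕ} (E : Finset (Finset (Fin n))) :
    (liftE E).card = E.card * n := by
  unfold liftE
  rw [Finset.card_image_of_injective _ (liftMap_inj n), Finset.card_product, Finset.card_univ,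
    Fintype.card_fin]

lemma liftE_unif {n s : ℕ} (E : Finset (Finset (Fin n))) (hunif : ∀ e ∈ E, e.card = s) :
    ∀ a ∈ liftE E, a.card = s + 1 := by
  intro a ha
  unfold liftE at ha
  rw [Finset.mem_image] at ha
  obtain ⟨⟨e, b⟩, hp, rfl⟩ := ha
  rw [Finset.mem_product] at hp
  have hd : Disjoint (e.image Sum.inl) ({Sum.inr b} : Finset (Fin n ⊕ Fin n)) := by
    simp [Finset.disjoint_singleton_right]
  rw [Finset.card_union_of_disjoint hd, Finset.card_image_of_injective _ Sum.inl_injective,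
    Finset.card_singleton, hunif e hp.1]

/-- Position of the `m`-th non-special vertex. -/
def oo (s m : ℕ) : ℕ := 1 + m + m / s

lemma oo_decomp (s m : ℕ) : oo s m = (m / s) * (s + 1) + (m % s + 1) := by
  have h := Nat.div_add_mod m s
  calc oo s m = 1 + m + m / s := rfl
    _ = 1 + (s * (m / s) + m % s) + m / s := by rw [h]
    _ = (m / s) * (s + 1) + (m % s + 1) := by ring

lemma oo_add (s q m : ℕ) (hs : 0 < s) : oo s (m + q * s) = oo s m + q * (s + 1) := by
  unfold oo
  rw [Nat.add_mul_div_right m q hs]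
  ring

lemma oo_lt (s q m : ℕ) (hs : 0 < s) (h : m < q * s) : oo s m < q * (s + 1) := by
  have h1 : m / s < q := (Nat.div_lt_iff_lt_mul hs).2 h
  have h2 : q * (s + 1) = q * s + q := by ring
  unfold oo
  omega

lemma oo_lt_oo (s m m' : ℕ) (h : m < m') : oo s m < oo s m' := by
  have := Nat.div_le_div_right (c := s) (le_of_lt h)
  unfold oo
  omega

lemma div_add_small (s m j : ℕ) (hs : 0 < s) (hj : j < s) :
    (m + j) / s = m / s + (if s ≤ m % s + j then 1 else 0) := by
  have h := Nat.div_add_mod m s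
  have hms : m % s < s := Nat.mod_lt _ hs
  have h1 : m + j = s * (m / s) + (m % s + j) := by omega
  rw [h1, Nat.mul_add_div hs]
  congr 1
  split_ifs with hle
  · exact Nat.div_eq_of_lt_le (by omega) (by omega)
  · exact Nat.div_eq_of_lt (by omega)

lemma oo_add_small (s m j : ℕ) (hs : 0 < s) (hj : j < s) :
    oo s (m + j) = oo s m + (j + if s ≤ m % s + j then 1 else 0) := by
  unfold oo
  rw [div_add_small s m j hs hj]
  split_ifs <;> ring

/-- The key combinatorial lemma: the lift of a tight-cycle-free `s`-uniform
hypergraph is tight-cycle-free. -/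
lemma liftE_tcf {n s : ℕ} (hs : 1 ≤ s) (E : Finset (Finset (Fin n)))
    (hunif : ∀ e ∈ E, e.card = s) (hTCF : TightCycleFree s (E : Set (Finset (Fin n)))) :
    TightCycleFree (s + 1) ((liftE E : Finset (Finset (Fin n ⊕ Fin n))) :
      Set (Finset (Fin n ⊕ Fin n))) := by
  rintro ⟨ℓ, hℓ, v, hv, hwin⟩
  haveI : NeZero ℓ := ⟨by omega⟩
  have hs0 : 0 < s := hs
  -- each window is of the form e.image inl ∪ {inr b}
  have win_spec : ∀ i : ZMod ℓ, ∃ e ∈ E, ∃ b : Fin n,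
      tightWindow (s + 1) v i = e.image Sum.inl ∪ {Sum.inr b} := by
    intro i
    have h := hwin i
    rw [Finset.mem_coe] at h
    unfold liftE at h
    rw [Finset.mem_image] at h
    obtain ⟨⟨e, b⟩, hp, hew⟩ := h
    rw [Finset.mem_product] at hp
    exact ⟨e, hp.1, b, hew.symm⟩
  have cast_inj : ∀ a b : ℕ, a < ℓ → b < ℓ → ((a : ZMod ℓ) = (b : ZMod ℓ)) → a = b := by
    intro a b ha hb hab
    have := congrArg ZMod.val hab
    rwa [ZMod.val_natCast_of_lt ha, ZMod.val_natCast_of_lt hb] at this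
  -- each window contains exactly one `inr` vertex
  have hmemP : ∀ i : ZMod ℓ, ∃ j : ℕ, j < s + 1 ∧ (v (i + (j : ℕ))).isRight ∧
      ∀ j' : ℕ, j' < s + 1 → (v (i + (j' : ℕ))).isRight → j' = j := by
    intro i
    obtain ⟨e, he, b, hwin_i⟩ := win_spec i
    have hb : Sum.inr b ∈ tightWindow (s + 1) v i := by
      rw [hwin_i]; exact Finset.mem_union_right _ (Finset.mem_singleton_self _)
    rw [tightWindow, Finset.mem_image] at hb
    obtain ⟨j, -, hj⟩ := hb
    have honly : ∀ j' : ℕ, j' < s + 1 → (v (i + (j' : ℕ))).isRight →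
        v (i + (j' : ℕ)) = Sum.inr b := by
      intro j' hj' hr
      have hmem : v (i + (j' : ℕ)) ∈ tightWindow (s + 1) v i := by
        rw [tightWindow, Finset.mem_image]
        exact ⟨⟨j', hj'⟩, Finset.mem_univ _, rfl⟩
      rw [hwin_i, Finset.mem_union] at hmem
      rcases hmem with hm | hm
      · rw [Finset.mem_image] at hm
        obtain ⟨a, -, ha⟩ := hm
        rw [← ha] at hr
        simp at hr
      · rwa [Finset.mem_singleton] at hm
    refine ⟨(j : ℕ), j.isLt, by rw [hj]; rfl, ?_⟩
    intro j' hj' hr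
    have h1 : v (i + (j' : ℕ)) = Sum.inr b := honly j' hj' hr
    have h2 : i + ((j' : ℕ) : ZMod ℓ) = i + (((j : ℕ) : ℕ) : ZMod ℓ) := hv (by rw [h1, hj])
    exact cast_inj j' (j : ℕ) (by omega) (by omega) (add_left_cancel h2)
  -- step lemmas
  have hstep1 : ∀ (i : ZMod ℓ) (j : ℕ), (v i).isRight → 0 < j → j < s + 1 →
      ¬ (v (i + (j : ℕ))).isRight := by
    intro i j hPi hj0 hjs hPj
    obtain ⟨j₀, hj₀s, hPj₀, huniq⟩ := hmemP i
    have e1 : (0 : ℕ) = j₀ := huniq 0 (by omega) (by simpa using hPi)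
    have e2 : j = j₀ := huniq j hjs hPj
    omega
  have hstep2 : ∀ i : ZMod ℓ, (v i).isRight → (v (i + ((s + 1 : ℕ) : ZMod ℓ))).isRight := by
    intro i hPi
    obtain ⟨j₀, hj₀s, hPj₀, huniq⟩ := hmemP (i + 1)
    have hj₀ : j₀ = s := by
      by_contra hne
      have h : (v (i + ((1 + j₀ : ℕ) : ZMod ℓ))).isRight := by
        have he : i + 1 + ((j₀ : ℕ) : ZMod ℓ) = i + ((1 + j₀ : ℕ) : ZMod ℓ) := by
          push_cast; ring
        rwa [he] at hPj₀
      exact hstep1 i (1 + j₀) hPi (by omega) (by omega) h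
    subst hj₀
    have he : i + 1 + ((j₀ : ℕ) : ZMod ℓ) = i + ((j₀ + 1 : ℕ) : ZMod ℓ) := by
      push_cast; ring
    rwa [he] at hPj₀
  have hstep3 : ∀ (i : ZMod ℓ), (v i).isRight → ∀ k : ℕ,
      (v (i + ((k * (s + 1) : ℕ) : ZMod ℓ))).isRight := by
    intro i hPi k
    induction k with
    | zero => simpa using hPi
    | succ k ih =>
        have h := hstep2 _ ih
        have heq : i + ((k * (s + 1) : ℕ) : ZMod ℓ) + ((s + 1 : ℕ) : ZMod ℓ)
            = i + (((k + 1) * (s + 1) : ℕ) : ZMod ℓ) := by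
          push_cast; ring
        rwa [heq] at h
  -- there exists an `inr` position
  obtain ⟨j₀, hj₀s, hPj₀, -⟩ := hmemP 0
  set c : ZMod ℓ := (0 : ZMod ℓ) + ((j₀ : ℕ) : ZMod ℓ) with hc
  have hPc : (v c).isRight := hPj₀
  -- (s+1) divides ℓ
  have hdvd : (s + 1) ∣ ℓ := by
    by_contra hnd
    have hmod : 0 < ℓ % (s + 1) := Nat.pos_of_ne_zero (fun h => hnd (Nat.dvd_of_mod_eq_zero h))
    have hmodlt : ℓ % (s + 1) < s + 1 := Nat.mod_lt _ (by omega)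
    have hP1 : (v (c + ((ℓ / (s + 1) * (s + 1) : ℕ) : ZMod ℓ))).isRight := hstep3 c hPc _
    refine hstep1 _ (ℓ % (s + 1)) hP1 hmod hmodlt ?_
    have heq : c + ((ℓ / (s + 1) * (s + 1) : ℕ) : ZMod ℓ) + ((ℓ % (s + 1) : ℕ) : ZMod ℓ)
        = c := by
      rw [add_assoc, ← Nat.cast_add]
      have hsum : ℓ / (s + 1) * (s + 1) + ℓ % (s + 1) = ℓ := by
        rw [mul_comm]
        exact Nat.div_add_mod ℓ (s + 1)
      rw [hsum, ZMod.natCast_self, add_zero]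
    rw [heq]
    exact hPc
  obtain ⟨q, hq⟩ := hdvd
  have hℓq : ℓ = q * (s + 1) := by rw [hq]; ring
  have hq2 : 2 ≤ q := by
    by_contra hle
    interval_cases q <;> omega
  -- the reduced cycle
  set L : ℕ := q * s with hLdef
  have hL : s < L := by
    calc s < 2 * s := by omega
      _ ≤ q * s := Nat.mul_le_mul_right s hq2
  haveI : NeZero L := ⟨by omega⟩
  have hLℓ : ∀ m : ℕ, m < L → oo s m < ℓ := by
    intro m hm
    rw [hℓq]
    exact oo_lt s q m hs0 hm
  set φ : ℕ → ZMod ℓ := fun m => c + ((oo s m : ℕ) : ZMod ℓ) with hφ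
  have hφ_per : ∀ m : ℕ, φ (m + L) = φ m := by
    intro m
    simp only [hφ, hLdef]
    rw [oo_add s q m hs0, Nat.cast_add, ← hℓq, ZMod.natCast_self, add_zero]
  have hφ_per' : ∀ (k m : ℕ), φ (m + k * L) = φ m := by
    intro k
    induction k with
    | zero => intro m; simp
    | succ k ih =>
        intro m
        have h1 : m + (k + 1) * L = (m + k * L) + L := by ring
        rw [h1, hφ_per, ih]
  have hφ_mod : ∀ m : ℕ, φ m = φ (m % L) := by
    intro m
    calc φ m = φ (m % L + m / L * L) := by rw [Nat.mod_add_div']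
      _ = φ (m % L) := hφ_per' _ _
  have hφ_notP : ∀ m : ℕ, ¬ (v (φ m)).isRight := by
    intro m
    have h1 : φ m = c + (((m / s) * (s + 1) : ℕ) : ZMod ℓ) + (((m % s + 1) : ℕ) : ZMod ℓ) := by
      simp only [hφ]
      rw [oo_decomp s m]
      push_cast
      ring
    rw [h1]
    exact hstep1 _ (m % s + 1) (hstep3 c hPc (m / s)) (by omega)
      (by have := Nat.mod_lt m hs0; omega)
  have hφ_inl : ∀ m : ℕ, ∃ a : Fin n, v (φ m) = Sum.inl a := by
    intro m
    rcases h : v (φ m) with a | b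
    · exact ⟨a, rfl⟩
    · exact absurd (by rw [h]; rfl) (hφ_notP m)
  have hφ_inj : ∀ m m' : ℕ, m < L → m' < L → φ m = φ m' → m = m' := by
    intro m m' hm hm' h
    have h2 : ((oo s m : ℕ) : ZMod ℓ) = ((oo s m' : ℕ) : ZMod ℓ) := by
      simp only [hφ] at h
      exact add_left_cancel h
    have h3 : oo s m = oo s m' := cast_inj _ _ (hLℓ m hm) (hLℓ m' hm') h2
    rcases lt_trichotomy m m' with hlt | heq | hgt
    · exact absurd h3 (Nat.ne_of_lt (oo_lt_oo s m m' hlt))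
    · exact heq
    · exact absurd h3.symm (Nat.ne_of_lt (oo_lt_oo s m' m hgt))
  -- the reduced vertex map
  refine hTCF ⟨L, hL, fun x => Sum.elim id id (v (φ x.val)), ?_, ?_⟩
  · intro x y hxy
    obtain ⟨a, ha⟩ := hφ_inl x.val
    obtain ⟨b, hb⟩ := hφ_inl y.val
    have hab : a = b := by
      simpa [ha, hb] using hxy
    have hphi : φ x.val = φ y.val := hv (by rw [ha, hb, hab])
    exact ZMod.val_injective L (hφ_inj _ _ (ZMod.val_lt x) (ZMod.val_lt y) hphi)
  · intro i
    set m : ℕ := i.val with hm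
    obtain ⟨e, he, b, hwm⟩ := win_spec (φ m)
    have hφF : ∀ j : ℕ, j < s →
        φ (m + j) = φ m + (((j + if s ≤ m % s + j then 1 else 0 : ℕ)) : ZMod ℓ) := by
      intro j hj
      simp only [hφ]
      rw [oo_add_small s m j hs0 hj, Nat.cast_add]
      ring
    have hmem_e : ∀ j : ℕ, j < s → ∃ a ∈ e, v (φ (m + j)) = Sum.inl a := by
      intro j hj
      have hDlt : (j + if s ≤ m % s + j then 1 else 0) < s + 1 := by
        split_ifs <;> omega
      have h1 : v (φ (m + j)) ∈ tightWindow (s + 1) v (φ m) := by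
        rw [hφF j hj, tightWindow, Finset.mem_image]
        exact ⟨⟨_, hDlt⟩, Finset.mem_univ _, rfl⟩
      rw [hwm, Finset.mem_union] at h1
      rcases h1 with h1 | h1
      · rw [Finset.mem_image] at h1
        obtain ⟨a, ha, haa⟩ := h1
        exact ⟨a, ha, haa.symm⟩
      · rw [Finset.mem_singleton] at h1
        exact absurd (by rw [h1]; rfl) (hφ_notP (m + j))
    have hval : ∀ j : ℕ, φ ((i + (j : ℕ)).val) = φ (m + j) := by
      intro j
      have h1 : (i + ((j : ℕ) : ZMod L)).val = (m + j) % L := by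
        rw [ZMod.val_add, ZMod.val_natCast, ← hm, Nat.add_mod_mod]
      rw [h1]
      exact (hφ_mod (m + j)).symm
    have hwval : ∀ j : ℕ, j < s → ∀ a : Fin n, v (φ (m + j)) = Sum.inl a →
        Sum.elim id id (v (φ ((i + (j : ℕ)).val))) = a := by
      intro j hj a ha
      rw [hval j, ha]
      rfl
    have hd_inj : ∀ j j' : ℕ, j < s → j' < s →
        (j + if s ≤ m % s + j then 1 else 0) = (j' + if s ≤ m % s + j' then 1 else 0) →
        j = j' := by
      intro j j' hj hj' h
      split_ifs at h <;> omega
    have hinj_w : Function.Injective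
        (fun j : Fin s => Sum.elim id id (v (φ ((i + ((j : ℕ) : ZMod L)).val)))) := by
      intro j j' hjj
      obtain ⟨a, ha, hva⟩ := hmem_e j j.isLt
      obtain ⟨a', ha', hva'⟩ := hmem_e j' j'.isLt
      have h1 := hwval j j.isLt a hva
      have h2 := hwval j' j'.isLt a' hva'
      have hab : a = a' := by
        rw [← h1, ← h2]
        exact hjj
      have hvv : v (φ (m + j)) = v (φ (m + j')) := by rw [hva, hva', hab]
      have hphi := hv hvv
      rw [hφF j j.isLt, hφF j' j'.isLt] at hphi
      have hDD := add_left_cancel hphi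
      have hDlt : (↑j + if s ≤ m % s + ↑j then 1 else 0) < s + 1 := by split_ifs <;> omega
      have hDlt' : (↑j' + if s ≤ m % s + ↑j' then 1 else 0) < s + 1 := by split_ifs <;> omega
      have := cast_inj _ _ (by omega) (by omega) hDD
      exact Fin.ext (hd_inj j j' j.isLt j'.isLt this)
    have hsub : tightWindow s (fun x : ZMod L => Sum.elim id id (v (φ x.val))) i ⊆ e := by
      intro x hx
      rw [tightWindow, Finset.mem_image] at hx
      obtain ⟨j, -, hj⟩ := hx
      obtain ⟨a, ha, hva⟩ := hmem_e j j.isLt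
      rw [← hj, hwval j j.isLt a hva]
      exact ha
    have hcard : (tightWindow s (fun x : ZMod L => Sum.elim id id (v (φ x.val))) i).card
        = s := by
      rw [tightWindow, Finset.card_image_of_injective _ hinj_w, Finset.card_univ,
        Fintype.card_fin]
    have heq : tightWindow s (fun x : ZMod L => Sum.elim id id (v (φ x.val))) i = e :=
      Finset.eq_of_subset_of_card_le hsub (by rw [hcard, hunif e he])
    rw [Finset.mem_coe, heq]
    exact he

end TCAux

/-- For `r ≥ 4` and `n ≥ 1`, `f_r(2n) ≥ n * f_{r-1}(n)`. -/
theorem tightCycleTuran_double (r n : ℕ) (hr : 4 ≤ r) (hn : 0 < n) :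
    n * tightCycleTuran (r - 1) n ≤ tightCycleTuran r (2 * n) := by
  open TCAux in
  have hmem := Nat.sSup_mem ⟨0, TCAux.turanSet_zero_mem (r - 1) n⟩
    (TCAux.turanSet_bddAbove (r - 1) n)
  obtain ⟨E, hunif, hTCF, hcard⟩ := hmem
  set σ : (Fin n ⊕ Fin n) ≃ Fin (2 * n) := finSumFinEquiv.trans (finCongr (by omega)) with hσ
  set E'' : Finset (Finset (Fin (2 * n))) := (TCAux.liftE E).image (Finset.image σ) with hE''
  have h1 : ∀ a ∈ E'', a.card = r := by
    intro a ha
    rw [hE'', Finset.mem_image] at ha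
    obtain ⟨A, hA, rfl⟩ := ha
    rw [Finset.card_image_of_injective _ σ.injective]
    have := TCAux.liftE_unif E hunif A hA
    omega
  have h2 : TightCycleFree r (E'' : Set (Finset (Fin (2 * n)))) := by
    have ht := TCAux.tcf_image_equiv σ (r - 1 + 1) (TCAux.liftE E)
      (TCAux.liftE_tcf (by omega) E hunif hTCF)
    rwa [show r - 1 + 1 = r from by omega] at ht
  have h3 : E''.card = n * tightCycleTuran (r - 1) n := by
    rw [hE'', Finset.card_image_of_injective _ (Finset.image_injective σ.injective),
      TCAux.liftE_card, hcard, tightCycleTuran, mul_comm]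
    rfl
  have hfin : n * tightCycleTuran (r - 1) n ∈ TCAux.turanSet r (2 * n) := ⟨E'', h1, h2, h3⟩
  rw [TCAux.tightCycleTuran_eq]
  exact le_csSup (TCAux.turanSet_bddAbove r (2 * n)) hfin
end
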